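/- For n ≥ 2, the subgroup of (n−2)-decomposable braids in the pure braid group P_n (those q ∈ P_n with φ_S(q) = 1 for every subset S ⊆ N of cardinality n−2) equals the commutator subgroup [P_n, P_n] of P_n. -/

import Mathlib

/-
Both directions pass through the exponent sums `ε_{a,b} : P_n → ℤ` of the generators, which
determine the image of a braid in the abelianization because every relator has exponent sum zero
in each generator. For `S = N ∖ {a, b}` the map `φ_S` fixes `p_{a,b}` and kills every other
generator, so it preserves `ε_{a,b}`: an `(n-2)`-decomposable braid has all exponent sums zero and
hence lies in `[P_n, P_n]`. Conversely, if `|S| = n - 2` then at most one generator `p_{a,b}`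
survives `φ_S`, so the image of `φ_S` is cyclic and `φ_S` kills all commutators.
-/

/-- The free-group generator corresponding to the pure braid generator
`p_{a,b}` for `a < b` (indices in `Fin n`, so strand `i+1` of `{1,…,n}`
corresponds to `i : Fin n`). -/
def pf {n : ℕ} (a b : Fin n) (h : a < b) :
    FreeGroup {q : Fin n × Fin n // q.1 < q.2} :=
  FreeGroup.of ⟨(a, b), h⟩

/-- The defining relations (A), (B), (C) of the pure braid group `P_n`,
each written in the form `lhs⁻¹ * rhs` for an equation `lhs = rhs`. -/
def braidRels (n : ℕ) : Set (FreeGroup {q : Fin n × Fin n // q.1 < q.2}) :=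
  -- (A) first equality: p_{a,b} p_{a,c} p_{b,c} = p_{a,c} p_{b,c} p_{a,b}
  {r | ∃ (a b c : Fin n) (hab : a < b) (hbc : b < c),
      r = (pf a b hab * pf a c (hab.trans hbc) * pf b c hbc)⁻¹ *
          (pf a c (hab.trans hbc) * pf b c hbc * pf a b hab)} ∪
  -- (A) second equality: p_{a,b} p_{a,c} p_{b,c} = p_{b,c} p_{a,b} p_{a,c}
  {r | ∃ (a b c : Fin n) (hab : a < b) (hbc : b < c),
      r = (pf a b hab * pf a c (hab.trans hbc) * pf b c hbc)⁻¹ *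
          (pf b c hbc * pf a b hab * pf a c (hab.trans hbc))} ∪
  -- (B) first: p_{a,b} p_{c,d} = p_{c,d} p_{a,b}
  {r | ∃ (a b c d : Fin n) (hab : a < b) (hbc : b < c) (hcd : c < d),
      r = (pf a b hab * pf c d hcd)⁻¹ * (pf c d hcd * pf a b hab)} ∪
  -- (B) second: p_{a,d} p_{b,c} = p_{b,c} p_{a,d}
  {r | ∃ (a b c d : Fin n) (hab : a < b) (hbc : b < c) (hcd : c < d),
      r = (pf a d (hab.trans (hbc.trans hcd)) * pf b c hbc)⁻¹ *
          (pf b c hbc * pf a d (hab.trans (hbc.trans hcd)))} ∪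
  -- (C): p_{a,c} (p_{b,c}⁻¹ p_{b,d} p_{b,c}) = (p_{b,c}⁻¹ p_{b,d} p_{b,c}) p_{a,c}
  {r | ∃ (a b c d : Fin n) (hab : a < b) (hbc : b < c) (hcd : c < d),
      r = (pf a c (hab.trans hbc) * ((pf b c hbc)⁻¹ * pf b d (hbc.trans hcd) * pf b c hbc))⁻¹ *
          ((pf b c hbc)⁻¹ * pf b d (hbc.trans hcd) * pf b c hbc * pf a c (hab.trans hbc))}

/-- The pure braid group `P_n`, given by the presentation above. -/
abbrev PB (n : ℕ) := PresentedGroup (braidRels n)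

/-- The generator `p_{a,b}` of the pure braid group, for `a < b`. -/
def p {n : ℕ} (a b : Fin n) (h : a < b) : PB n := PresentedGroup.of ⟨(a, b), h⟩

/-- `P_S`: the subgroup of `P_n` generated by all `p_{a,b}` with `a ∈ S` and `b ∈ S`. -/
def PS {n : ℕ} (S : Set (Fin n)) : Subgroup (PB n) :=
  Subgroup.closure {x | ∃ (a b : Fin n) (h : a < b), a ∈ S ∧ b ∈ S ∧ x = p a b h}

/-- `Q_S`: the subgroup of `P_n` generated by all `p_{a,b}` with `a ∈ S` or `b ∈ S`. -/
def QS {n : ℕ} (S : Set (Fin n)) : Subgroup (PB n) :=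
  Subgroup.closure {x | ∃ (a b : Fin n) (h : a < b), (a ∈ S ∨ b ∈ S) ∧ x = p a b h}

/-- `IsPhi S φ` says that `φ : P_n → P_n` is the homomorphism `φ_S`, i.e. it sends
`p_{a,b}` to itself if `a ∉ S` and `b ∉ S`, and to `1` otherwise. -/
def IsPhi {n : ℕ} (S : Set (Fin n)) (φ : PB n →* PB n) : Prop :=
  ∀ (a b : Fin n) (h : a < b),
    (a ∉ S ∧ b ∉ S → φ (p a b h) = p a b h) ∧ ((a ∈ S ∨ b ∈ S) → φ (p a b h) = 1)

/-- The support `σ(x)` of `x ∈ P_n`: the intersection of all `S` with `x ∈ P_S`. -/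
def support {n : ℕ} (x : PB n) : Set (Fin n) := ⋂₀ {S | x ∈ PS S}

/-- Monic commutators: the smallest set of elements of `P_n` containing all
`p_{a,b}` and `p_{a,b}⁻¹` and closed under taking nontrivial commutators
`[x,y] = x⁻¹ y⁻¹ x y`. -/
inductive IsMonic {n : ℕ} : PB n → Prop
  | of (a b : Fin n) (h : a < b) : IsMonic (p a b h)
  | inv (a b : Fin n) (h : a < b) : IsMonic (p a b h)⁻¹
  | comm (x y : PB n) : IsMonic x → IsMonic y → x⁻¹ * y⁻¹ * x * y ≠ 1 →
      IsMonic (x⁻¹ * y⁻¹ * x * y)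

open scoped IsMulCommutative in
theorem commutator_le_ker_of_commute {G H : Type*} [Group G] [Group H] {s : Set G}
    (hs : Subgroup.closure s = ⊤) (f : G →* H)
    (h : ∀ x ∈ s, ∀ y ∈ s, Commute (f x) (f y)) : commutator G ≤ f.ker := by
  have : IsMulCommutative f.range := by
    rw [MonoidHom.range_eq_map, ← hs, MonoidHom.map_closure]
    refine Subgroup.isMulCommutative_closure ?_
    rintro _ ⟨x, hx, rfl⟩ _ ⟨y, hy, rfl⟩
    exact h x hx y hy
  rw [← f.ker_rangeRestrict]
  exact Abelianization.commutator_subset_ker _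

theorem Set.eq_of_lt_of_lt_of_ncard_le_two {α : Type*} [LinearOrder α] [Finite α] {T : Set α}
    (hT : T.ncard ≤ 2) {a b c d : α} (hab : a < b) (hcd : c < d) (ha : a ∈ T) (hb : b ∈ T)
    (hc : c ∈ T) (hd : d ∈ T) : a = c ∧ b = d := by
  have hT' : {a, b} = T := Set.eq_of_subset_of_ncard_le (Set.insert_subset ha
    (Set.singleton_subset_iff.mpr hb)) (by rwa [Set.ncard_pair hab.ne])
  rw [← hT'] at hc hd
  rcases hc with rfl | rfl <;> rcases hd with rfl | rfl
  exacts [absurd hcd (lt_irrefl _), ⟨rfl, rfl⟩, absurd hcd (lt_asymm hab),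
    absurd hcd (lt_irrefl _)]

namespace PureBraid

variable {n : ℕ}

abbrev Pair (n : ℕ) := {q : Fin n × Fin n // q.1 < q.2}

open Classical in
noncomputable def phiFree (S : Set (Fin n)) : FreeGroup (Pair n) →* FreeGroup (Pair n) :=
  FreeGroup.lift fun s ↦ if s.1.1 ∈ S ∨ s.1.2 ∈ S then 1 else FreeGroup.of s

/- Each relator is `u⁻¹ * v` for two words `u`, `v`; once one of its indices lies in `S`, the
surviving letters of `u` and of `v` freely reduce to the same word. -/
theorem phiFree_eq_one_or_eq (S : Set (Fin n)) {r : FreeGroup (Pair n)}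
    (hr : r ∈ braidRels n) : phiFree S r = 1 ∨ phiFree S r = r := by
  rcases hr with ((((⟨a, b, c, hab, hbc, rfl⟩ | ⟨a, b, c, hab, hbc, rfl⟩) |
    ⟨a, b, c, d, hab, hbc, hcd, rfl⟩) | ⟨a, b, c, d, hab, hbc, hcd, rfl⟩) |
    ⟨a, b, c, d, hab, hbc, hcd, rfl⟩)
  iterate 2
    · by_cases a ∈ S <;> by_cases b ∈ S <;> by_cases c ∈ S <;>
        simp [phiFree, pf, mul_assoc, *]
  all_goals
    by_cases a ∈ S <;> by_cases b ∈ S <;> by_cases c ∈ S <;> by_cases d ∈ S <;>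
      simp [phiFree, pf, mul_assoc, *]

noncomputable def phi (S : Set (Fin n)) : PB n →* PB n :=
  QuotientGroup.map _ _ (phiFree S) <| Subgroup.normalClosure_le_normal fun r hr ↦ by
    change phiFree S r ∈ Subgroup.normalClosure (braidRels n)
    rcases phiFree_eq_one_or_eq S hr with h | h <;> rw [h]
    exacts [one_mem _, Subgroup.subset_normalClosure hr]

theorem isPhi_phi (S : Set (Fin n)) : IsPhi S (phi S) := by
  intro a b h
  have hp : phi S (p a b h) = PresentedGroup.mk _ (phiFree S (FreeGroup.of ⟨(a, b), h⟩)) := rfl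
  simp only [hp, phiFree, FreeGroup.lift_apply_of]
  constructor
  · rintro ⟨ha, hb⟩
    simp [ha, hb, p, PresentedGroup.of]
  · intro hab
    simp [hab]

theorem lift_eq_one_of_mem_braidRels {A : Type*} [CommGroup A] (f : Pair n → A)
    {r : FreeGroup (Pair n)} (hr : r ∈ braidRels n) : FreeGroup.lift f r = 1 := by
  rcases hr with ((((⟨a, b, c, hab, hbc, rfl⟩ | ⟨a, b, c, hab, hbc, rfl⟩) |
    ⟨a, b, c, d, hab, hbc, hcd, rfl⟩) | ⟨a, b, c, d, hab, hbc, hcd, rfl⟩) |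
    ⟨a, b, c, d, hab, hbc, hcd, rfl⟩) <;>
  simp [pf, mul_comm, mul_left_comm, mul_assoc]

noncomputable def exponentSum : PB n →* Multiplicative (Pair n →₀ ℤ) :=
  PresentedGroup.toGroup fun _ ↦ lift_eq_one_of_mem_braidRels
    fun s ↦ Multiplicative.ofAdd (Finsupp.single s 1)

theorem exponentSum_of (s : Pair n) :
    exponentSum (PresentedGroup.of s) = Multiplicative.ofAdd (Finsupp.single s 1) :=
  PresentedGroup.toGroup.of _

noncomputable def abelianizationOfExponents :
    Multiplicative (Pair n →₀ ℤ) →* Abelianization (PB n) :=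
  AddMonoidHom.toMultiplicativeLeft <| Finsupp.liftAddHom fun s ↦
    zmultiplesHom _ (Additive.ofMul (Abelianization.of (PresentedGroup.of s)))

theorem abelianizationOfExponents_exponentSum (q : PB n) :
    abelianizationOfExponents (exponentSum q) = Abelianization.of q := by
  have : (abelianizationOfExponents (n := n)).comp exponentSum = Abelianization.of :=
    PresentedGroup.ext fun s ↦ by simp [exponentSum_of, abelianizationOfExponents]
  exact DFunLike.congr_fun this q

theorem mem_commutator_of_exponentSum_eq_one {q : PB n} (h : exponentSum q = 1) :
    q ∈ commutator (PB n) := by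
  rw [← Abelianization.ker_of, MonoidHom.mem_ker, ← abelianizationOfExponents_exponentSum, h,
    map_one]

section

variable {S : Set (Fin n)} {φ : PB n →* PB n}

theorem _root_.IsPhi.commute_apply_of (hφ : IsPhi S φ) (hS : Sᶜ.ncard ≤ 2) :
    ∀ x ∈ Set.range PresentedGroup.of, ∀ y ∈ Set.range PresentedGroup.of,
      Commute (φ x) (φ y) := by
  rintro _ ⟨⟨⟨a, b⟩, hab⟩, rfl⟩ _ ⟨⟨⟨c, d⟩, hcd⟩, rfl⟩
  change Commute (φ (p a b hab)) (φ (p c d hcd))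
  by_cases h₁ : a ∈ S ∨ b ∈ S
  · rw [(hφ a b hab).2 h₁]
    exact Commute.one_left _
  by_cases h₂ : c ∈ S ∨ d ∈ S
  · rw [(hφ c d hcd).2 h₂]
    exact Commute.one_right _
  push Not at h₁ h₂
  obtain ⟨rfl, rfl⟩ := Set.eq_of_lt_of_lt_of_ncard_le_two hS hab hcd h₁.1 h₁.2 h₂.1 h₂.2
  exact Commute.refl _

theorem _root_.IsPhi.commutator_le_ker (hφ : IsPhi S φ) (hS : Sᶜ.ncard ≤ 2) :
    commutator (PB n) ≤ φ.ker :=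
  commutator_le_ker_of_commute (PresentedGroup.closure_range_of _) φ (hφ.commute_apply_of hS)

theorem _root_.IsPhi.exponentSum_map (hφ : IsPhi S φ) {t : Pair n} (ht : t.1.1 ∉ S ∧ t.1.2 ∉ S)
    (x : PB n) :
    Multiplicative.toAdd (exponentSum (φ x)) t = Multiplicative.toAdd (exponentSum x) t := by
  let e : PB n →* Multiplicative ℤ :=
    (AddMonoidHom.toMultiplicative (Finsupp.applyAddHom t)).comp exponentSum
  have : e.comp φ = e := PresentedGroup.ext fun ⟨⟨a, b⟩, hab⟩ ↦ by
    change e (φ (p a b hab)) = e (p a b hab)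
    by_cases h : a ∈ S ∨ b ∈ S
    · have hne : (⟨(a, b), hab⟩ : Pair n) ≠ t := by
        rintro rfl
        tauto
      rw [(hφ a b hab).2 h, map_one]
      simp [e, p, exponentSum_of, hne]
    · rw [(hφ a b hab).1 (not_or.mp h)]
  exact DFunLike.congr_fun this x

end

theorem mem_commutator_of_forall_isPhi {q : PB n}
    (H : ∀ S : Set (Fin n), S.ncard = n - 2 → ∀ φ : PB n →* PB n, IsPhi S φ → φ q = 1) :
    q ∈ commutator (PB n) := by
  refine mem_commutator_of_exponentSum_eq_one (Finsupp.ext fun ⟨⟨a, b⟩, hab⟩ ↦ ?_)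
  set S : Set (Fin n) := {a, b}ᶜ
  have hS : S.ncard = n - 2 := by
    rw [Set.ncard_compl, Set.ncard_pair hab.ne, Nat.card_eq_fintype_card, Fintype.card_fin]
  have := (isPhi_phi S).exponentSum_map (t := ⟨(a, b), hab⟩) (by simp [S]) q
  rwa [H S hS _ (isPhi_phi S), map_one, eq_comm] at this

end PureBraid

theorem n_sub_two_decomposable_general (n : ℕ) (q : PB n) :
    (∀ S : Set (Fin n), S.ncard = n - 2 →
        ∀ φ : PB n →* PB n, IsPhi S φ → φ q = 1) ↔
      q ∈ commutator (PB n) := by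
  refine ⟨PureBraid.mem_commutator_of_forall_isPhi, fun hq S hS φ hφ ↦ hφ.commutator_le_ker ?_ hq⟩
  rw [Set.ncard_compl, hS, Nat.card_eq_fintype_card, Fintype.card_fin]
  omega

/-- Corollary 2.4: the subgroup of `(n-2)`-decomposable braids
equals the commutator subgroup of `P_n`. -/
theorem n_sub_two_decomposable (n : ℕ) (hn : 2 ≤ n) (q : PB n) :
    (∀ S : Set (Fin n), S.ncard = n - 2 →
        ∀ φ : PB n →* PB n, IsPhi S φ → φ q = 1) ↔
      q ∈ commutator (PB n) :=
  n_sub_two_decomposable_general n q
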